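/- arXiv:2211.09416 — 3 statements merged into one kernel-verified Lean document; each statement's English description precedes it below -/
import Mathlib

section
/- The amoeba of a Laurent polynomial is a closed subset of ℝ^n. -/
open Real

/-- Evaluation of the Laurent polynomial with support `A` and coefficients `c`
at a point `z ∈ (ℂ*)ⁿ`. -/
noncomputable def evalL (n : ℕ) (A : Finset (Fin n → ℤ)) (c : (Fin n → ℤ) → ℂ)
    (z : Fin n → ℂ) : ℂ :=
  ∑ α ∈ A, c α * ∏ j, z j ^ α j

/-- The amoeba of a function on the complex torus: the image under
`Log (z₁,…,zₙ) = (ln|z₁|,…,ln|zₙ|)` of its zero locus in `(ℂ*)ⁿ`. -/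
def amoebaOf (n : ℕ) (f : (Fin n → ℂ) → ℂ) : Set (Fin n → ℝ) :=
  {x | ∃ z : Fin n → ℂ, (∀ j, z j ≠ 0) ∧ f z = 0 ∧
        ∀ j, Real.log ‖z j‖ = x j}

/-!
Polar coordinates `z j = exp (x j) · θ j` identify the torus `(ℂ*)ⁿ` with `ℝⁿ × (S¹)ⁿ`, and in
these coordinates `Log` is the projection to `ℝⁿ`. The amoeba of a function `f` continuous on the
torus is therefore the projection of the closed set `{(x, θ) | f (exp x · θ) = 0}`, and projecting
away the compact factor `(S¹)ⁿ` is a closed map.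
-/

section PolarCoordinates

variable {ι : Type*}

noncomputable def ofPolar (x : ι → ℝ) (θ : ι → Circle) : ι → ℂ :=
  fun j => (Real.exp (x j) : ℂ) * θ j

lemma norm_ofPolar (x : ι → ℝ) (θ : ι → Circle) (j : ι) :
    ‖ofPolar x θ j‖ = Real.exp (x j) := by
  simp [ofPolar, Circle.norm_coe]

lemma ofPolar_ne_zero (x : ι → ℝ) (θ : ι → Circle) (j : ι) : ofPolar x θ j ≠ 0 := by
  rw [← norm_pos_iff, norm_ofPolar]
  exact Real.exp_pos _

lemma log_norm_ofPolar (x : ι → ℝ) (θ : ι → Circle) (j : ι) :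
    Real.log ‖ofPolar x θ j‖ = x j := by
  rw [norm_ofPolar, Real.log_exp]

lemma ofPolar_log_norm_arg {z : ι → ℂ} (hz : ∀ j, z j ≠ 0) :
    ofPolar (fun j => Real.log ‖z j‖) (fun j => Circle.exp (z j).arg) = z := by
  funext j
  simp only [ofPolar, Circle.coe_exp]
  rw [Real.exp_log (norm_pos_iff.mpr (hz j)), Complex.norm_mul_exp_arg_mul_I]

lemma continuous_ofPolar :
    Continuous fun p : (ι → ℝ) × (ι → Circle) => ofPolar p.1 p.2 := by
  unfold ofPolar
  fun_prop

end PolarCoordinates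

lemma amoebaOf_eq_image_fst (n : ℕ) (f : (Fin n → ℂ) → ℂ) :
    amoebaOf n f = Prod.fst '' {p : (Fin n → ℝ) × (Fin n → Circle) | f (ofPolar p.1 p.2) = 0} := by
  ext x
  constructor
  · rintro ⟨z, hz, hfz, hlog⟩
    obtain rfl : (fun j => Real.log ‖z j‖) = x := funext hlog
    refine ⟨(fun j => Real.log ‖z j‖, fun j => Circle.exp (z j).arg), ?_, rfl⟩
    rwa [Set.mem_ofPred_eq, ofPolar_log_norm_arg hz]
  · rintro ⟨⟨x, θ⟩, hfz, rfl⟩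
    exact ⟨ofPolar x θ, ofPolar_ne_zero x θ, hfz, log_norm_ofPolar x θ⟩

theorem isClosed_amoebaOf {n : ℕ} {f : (Fin n → ℂ) → ℂ}
    (hf : ContinuousOn f {z | ∀ j, z j ≠ 0}) : IsClosed (amoebaOf n f) := by
  have hcont : Continuous fun p : (Fin n → ℝ) × (Fin n → Circle) => f (ofPolar p.1 p.2) :=
    hf.comp_continuous continuous_ofPolar fun p => ofPolar_ne_zero p.1 p.2
  rw [amoebaOf_eq_image_fst]
  exact isClosedMap_fst_of_compactSpace _ (isClosed_singleton.preimage hcont)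

lemma continuousOn_evalL (n : ℕ) (A : Finset (Fin n → ℤ)) (c : (Fin n → ℤ) → ℂ) :
    ContinuousOn (evalL n A c) {z | ∀ j, z j ≠ 0} := by
  unfold evalL
  refine continuousOn_finsetSum _ fun α _ => continuousOn_const.mul ?_
  refine continuousOn_finsetProd _ fun j _ => ?_
  exact (continuous_apply j).continuousOn.zpow₀ (α j) fun z hz => Or.inl (hz j)

theorem amoeba_isClosed_general (n : ℕ) (A : Finset (Fin n → ℤ)) (c : (Fin n → ℤ) → ℂ) :
    IsClosed (amoebaOf n (evalL n A c)) :=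
  isClosed_amoebaOf (continuousOn_evalL n A c)

/-- The amoeba of a Laurent polynomial (not identically zero on the torus)
is a closed subset of ℝⁿ. -/
theorem amoeba_isClosed (n : ℕ) (A : Finset (Fin n → ℤ)) (c : (Fin n → ℤ) → ℂ)
    (hnz : ∃ z : Fin n → ℂ, (∀ j, z j ≠ 0) ∧ evalL n A c z ≠ 0) :
    IsClosed (amoebaOf n (evalL n A c)) :=
  amoeba_isClosed_general n A c
end

section
/- Every connected component of the complement of the amoeba of a Laurent polynomial is an open convex subset of ℝ^n. -/
/-!
Choose an integer direction `r` on which the exponents of `p` have pairwise distinct weights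
`α ⬝ᵥ r`. Along each curve `τ ↦ (exp (w j + τ * r j))ⱼ`, `p` is `exp (m τ)` times a polynomial
in `exp τ` whose degree does not depend on `w`, and a root of modulus `exp t` of this polynomial
gives the point `Re w + t • r` of the amoeba. Over a connected set `E` missing the amoeba no root lies on the unit circle, so the number
of roots in the unit disc is constant on `E`. Translating `Re w` by `t • r` divides the roots by
`exp t`; hence if `a` and `a + s₀ • r` lie in `E`, no root has modulus in `[1, exp s₀]`, which
says that the segment between them misses the amoeba. Nonnegative multiples of such directions
are dense, and an open set containing the segments between its points in a dense set of
directions is convex.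
-/

open Real

open Polynomial Filter Topology

theorem Multiset.exists_map_univ_eq {α : Type*} {s : Multiset α} {D : ℕ}
    (hs : Multiset.card s = D) : ∃ f : Fin D → α, Finset.univ.val.map f = s := by
  obtain ⟨l, rfl⟩ : ∃ l : List α, (l : Multiset α) = s := ⟨s.toList, s.coe_toList⟩
  rw [Multiset.coe_card] at hs
  subst hs
  exact ⟨l.get, by rw [Fin.univ_val_map, List.ofFn_get]⟩

theorem Multiset.countP_lt_countP {α : Type*} {p q : α → Prop} [DecidablePred p]
    [DecidablePred q] {s : Multiset α} (hpq : ∀ x, p x → q x) {x : α} (hx : x ∈ s) (hqx : q x)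
    (hpx : ¬p x) : s.countP p < s.countP q := by
  rw [countP_eq_card_filter, countP_eq_card_filter]
  refine card_lt_card (lt_of_le_of_ne (monotone_filter_right s hpq) fun h => hpx ?_)
  exact (mem_filter.1 (h ▸ mem_filter.2 ⟨hx, hqx⟩)).2

theorem eventually_countP_map_eq {κ ι E : Type*} [Fintype ι] [SeminormedAddGroup E] {l : Filter κ}
    {L : κ → ι → E} {L₀ : ι → E} (hL : Tendsto L l (𝓝 L₀)) {R : ℝ} (hR : ∀ i, ‖L₀ i‖ ≠ R) :
    ∀ᶠ k in l, (Finset.univ.val.map (L k)).countP (‖·‖ < R)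
      = (Finset.univ.val.map L₀).countP (‖·‖ < R) := by
  have hiff : ∀ᶠ k in l, ∀ i, (‖L k i‖ < R ↔ ‖L₀ i‖ < R) := by
    refine eventually_all.2 fun i => ?_
    have hnorm : Tendsto (fun k => ‖L k i‖) l (𝓝 ‖L₀ i‖) := (tendsto_pi_nhds.1 hL i).norm
    rcases (hR i).lt_or_gt with hlt | hgt
    · exact (hnorm.eventually_lt_const hlt).mono fun k hk => iff_of_true hk hlt
    · exact (hnorm.eventually_const_lt hgt).mono fun k hk => iff_of_false hk.not_gt hgt.not_gt
  filter_upwards [hiff] with k hk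
  simp only [Multiset.countP_map]
  exact congrArg _ (Multiset.filter_congr fun i _ => hk i)

namespace Polynomial

section TopologicalSemiring
variable {R ι : Type*} [CommSemiring R] [TopologicalSpace R] [IsTopologicalSemiring R]
  {l : Filter ι} {P : ι → R[X]} {Q : R[X]}

theorem tendsto_eval_of_tendsto_coeff {D : ℕ} (hP : ∀ k, (P k).natDegree ≤ D)
    (hQ : Q.natDegree ≤ D) (hcoeff : ∀ i, Tendsto (fun k => (P k).coeff i) l (𝓝 (Q.coeff i)))
    (x : R) : Tendsto (fun k => (P k).eval x) l (𝓝 (Q.eval x)) := by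
  simp only [fun k => eval_eq_sum_range' (Nat.lt_succ_of_le (hP k)) x,
    eval_eq_sum_range' (Nat.lt_succ_of_le hQ) x]
  exact tendsto_finsetSum _ fun i _ => (hcoeff i).mul_const _

end TopologicalSemiring

theorem tendsto_cauchyBound {ι K : Type*} [NormedField K] {l : Filter ι} {P : ι → K[X]} {Q : K[X]}
    (hdeg : ∀ k, (P k).natDegree = Q.natDegree) (hQ : Q ≠ 0)
    (hcoeff : ∀ i, Tendsto (fun k => (P k).coeff i) l (𝓝 (Q.coeff i))) :
    Tendsto (fun k => cauchyBound (P k)) l (𝓝 (cauchyBound Q)) := by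
  simp only [cauchyBound, leadingCoeff, hdeg]
  refine (Tendsto.div ?_ (hcoeff _).nnnorm (by simpa using hQ)).add_const 1
  exact Tendsto.finset_sup_nhds_apply fun i _ => (hcoeff i).nnnorm

theorem eval_eq_leadingCoeff_mul_prod {ι K : Type*} [Fintype ι] [Field K] [IsAlgClosed K]
    {P : K[X]} {L : ι → K} (hL : Finset.univ.val.map L = P.roots) (x : K) :
    P.eval x = P.leadingCoeff * ∏ i, (x - L i) := by
  conv_lhs =>
    rw [← C_leadingCoeff_mul_prod_multiset_X_sub_C (p := P) IsAlgClosed.card_roots_eq_natDegree]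
  rw [eval_mul, eval_C, eval_multiset_prod, ← hL, Multiset.map_map, Multiset.map_map]
  simp [Finset.prod_map_val]

theorem roots_eq_map_of_tendsto {κ : Type*} {l : Filter κ} [l.NeBot] {P : κ → ℂ[X]} {Q : ℂ[X]}
    {D : ℕ} (hP : ∀ k, (P k).natDegree = D) (hQ : Q.degree = D)
    (hcoeff : ∀ i, Tendsto (fun k => (P k).coeff i) l (𝓝 (Q.coeff i)))
    {L : κ → Fin D → ℂ} (hL : ∀ k, Finset.univ.val.map (L k) = (P k).roots) {L₀ : Fin D → ℂ}
    (hlim : Tendsto L l (𝓝 L₀)) : Finset.univ.val.map L₀ = Q.roots := by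
  have hQD : Q.natDegree = D := natDegree_eq_of_degree_eq_some hQ
  have hQ0 : Q.coeff D ≠ 0 := by
    rw [← hQD, coeff_natDegree, Ne, leadingCoeff_eq_zero]
    exact ne_zero_of_coe_le_degree hQ.ge
  have heval : ∀ x, Q.eval x = Q.coeff D * ∏ i, (x - L₀ i) := by
    intro x
    refine tendsto_nhds_unique (tendsto_eval_of_tendsto_coeff (hP · |>.le) hQD.le hcoeff x) ?_
    simp only [eval_eq_leadingCoeff_mul_prod (hL _), leadingCoeff, hP]
    exact (hcoeff D).mul (tendsto_finsetProd _ fun i _ =>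
      tendsto_const_nhds.sub (tendsto_pi_nhds.1 hlim i))
  have hQprod : Q = C (Q.coeff D) * ((Finset.univ.val.map L₀).map fun a => X - C a).prod := by
    refine Polynomial.funext fun x => ?_
    rw [heval, eval_mul, eval_C, eval_multiset_prod, Multiset.map_map, Multiset.map_map]
    simp only [Function.comp_def, eval_sub, eval_X, eval_C]
    rfl
  rw [hQprod, roots_C_mul _ hQ0, roots_multiset_prod_X_sub_C]

theorem eventually_countP_roots_eq {κ : Type*} {l : Filter κ} [l.IsCountablyGenerated]
    {P : κ → ℂ[X]} {Q : ℂ[X]} {D : ℕ} (hP : ∀ k, (P k).degree = D) (hQ : Q.degree = D)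
    (hcoeff : ∀ i, Tendsto (fun k => (P k).coeff i) l (𝓝 (Q.coeff i)))
    {R : ℝ} (hR : ∀ ρ ∈ Q.roots, ‖ρ‖ ≠ R) :
    ∀ᶠ k in l, (P k).roots.countP (‖·‖ < R) = Q.roots.countP (‖·‖ < R) := by
  rw [eventually_iff_seq_eventually]
  intro u hu
  by_contra hfreq
  obtain ⟨ψ, hψ, hne⟩ := extraction_of_frequently_atTop (not_eventually.1 hfreq)
  set P' : ℕ → ℂ[X] := fun k => P (u (ψ k))
  have hcoeff' : ∀ i, Tendsto (fun k => (P' k).coeff i) atTop (𝓝 (Q.coeff i)) :=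
    fun i => (hcoeff i).comp (hu.comp hψ.tendsto_atTop)
  have hP'D : ∀ k, (P' k).natDegree = D := fun k => natDegree_eq_of_degree_eq_some (hP _)
  have hQD : Q.natDegree = D := natDegree_eq_of_degree_eq_some hQ
  have hQ0 : Q ≠ 0 := ne_zero_of_coe_le_degree hQ.ge
  choose L hL using fun k => Multiset.exists_map_univ_eq
    (IsAlgClosed.card_roots_eq_natDegree.trans (hP'D k))
  -- the Cauchy bounds of the `P' k` converge, so their roots stay in a fixed ball
  have hbound : ∀ᶠ k in atTop, L k ∈ Metric.closedBall 0 (cauchyBound Q + 1 : ℝ) := by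
    have := (tendsto_cauchyBound (fun k => (hP'D k).trans hQD.symm) hQ0 hcoeff').eventually_lt_const
      (lt_add_one (cauchyBound Q))
    filter_upwards [this] with k hk
    refine (mem_closedBall_zero_iff.2 <| (pi_norm_le_iff_of_nonneg (by positivity)).2 fun i => ?_)
    have hroot : (P' k).IsRoot (L k i) :=
      isRoot_of_mem_roots (hL k ▸ Multiset.mem_map_of_mem _ (Finset.mem_univ_val i))
    exact_mod_cast ((hroot.norm_lt_cauchyBound (ne_zero_of_coe_le_degree (hP _).ge)).trans hk).le
  obtain ⟨L₀, -, φ, hφ, hlim⟩ := (isCompact_closedBall _ _).tendsto_subseq' hbound.frequently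
  have hroots := roots_eq_map_of_tendsto (fun k => hP'D (φ k)) hQ (fun i => (hcoeff' i).comp
    hφ.tendsto_atTop) (fun k => hL (φ k)) hlim
  have hL₀ : ∀ i, ‖L₀ i‖ ≠ R := fun i =>
    hR _ (hroots ▸ Multiset.mem_map_of_mem _ (Finset.mem_univ_val i))
  obtain ⟨k, hk⟩ := (eventually_countP_map_eq hlim hL₀).exists
  exact hne (φ k) (by simpa only [Function.comp, hL, hroots] using hk)

end Polynomial

theorem tendsto_int_floor_mul_div_atTop {R : Type*} [TopologicalSpace R] [Field R] [LinearOrder R]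
    [IsStrictOrderedRing R] [OrderTopology R] [FloorRing R] (a : R) :
    Tendsto (fun x ↦ (⌊a * x⌋ : R) / x) atTop (𝓝 a) := by
  have hlower : Tendsto (fun x : R ↦ a - x⁻¹) atTop (𝓝 a) := by
    simpa using tendsto_const_nhds.sub (tendsto_inv_atTop_zero (𝕜 := R))
  refine tendsto_of_tendsto_of_tendsto_of_le_of_le' hlower tendsto_const_nhds ?_ ?_
  · filter_upwards [eventually_gt_atTop 0] with x hx
    rw [le_div_iff₀ hx, sub_mul, inv_mul_cancel₀ hx.ne']
    linarith [Int.lt_floor_add_one (a * x)]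
  · filter_upwards [eventually_gt_atTop 0] with x hx
    rw [div_le_iff₀ hx]
    exact Int.floor_le _

theorem LinearMap.dense_setOf_ne_zero {𝕜 M : Type*} [NontriviallyNormedField 𝕜] [AddCommGroup M]
    [TopologicalSpace M] [ContinuousAdd M] [Module 𝕜 M] [ContinuousSMul 𝕜 M] {f : M →ₗ[𝕜] 𝕜}
    (hf : f ≠ 0) : Dense {x | f x ≠ 0} := by
  rw [show {x | f x ≠ 0} = (LinearMap.ker f : Set M)ᶜ by ext; simp,
    ← interior_eq_empty_iff_dense_compl, ← Set.not_nonempty_iff_eq_empty]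
  exact fun h => hf (LinearMap.ker_eq_top.1 ((LinearMap.ker f).eq_top_of_nonempty_interior' h))

theorem isOpen_dense_setOf_dotProduct_ne {n : ℕ} (S : Finset (Fin n → ℤ)) :
    IsOpen {ρ : Fin n → ℝ | ∀ p ∈ S.offDiag, (Int.cast ∘ p.1) ⬝ᵥ ρ ≠ (Int.cast ∘ p.2) ⬝ᵥ ρ} ∧
      Dense {ρ : Fin n → ℝ | ∀ p ∈ S.offDiag, (Int.cast ∘ p.1) ⬝ᵥ ρ ≠ (Int.cast ∘ p.2) ⬝ᵥ ρ} := by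
  set f : (Fin n → ℤ) × (Fin n → ℤ) → (Fin n → ℝ) →ₗ[ℝ] ℝ :=
    fun p => dotProductBilin ℝ ℝ (Int.cast ∘ p.1 - Int.cast ∘ p.2)
  have hset : {ρ : Fin n → ℝ | ∀ p ∈ S.offDiag, (Int.cast ∘ p.1) ⬝ᵥ ρ ≠ (Int.cast ∘ p.2) ⬝ᵥ ρ}
      = ⋂ p ∈ (S.offDiag : Set _), {ρ | f p ρ ≠ 0} := by
    ext ρ
    simp [f, sub_eq_zero]
  have hf : ∀ p ∈ (S.offDiag : Set _), f p ≠ 0 := by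
    rintro ⟨α, β⟩ hp hf0
    have hne : (Int.cast ∘ α - Int.cast ∘ β : Fin n → ℝ) ≠ 0 := by
      rw [sub_ne_zero]
      exact fun h => (Finset.mem_offDiag.1 hp).2.2 (funext fun j =>
        Int.cast_injective (α := ℝ) (congrFun h j))
    exact hne (dotProduct_self_eq_zero.1 (LinearMap.congr_fun hf0 _))
  have hopen : ∀ p ∈ (S.offDiag : Set _), IsOpen {ρ | f p ρ ≠ 0} :=
    fun p _ => isOpen_ne_fun (f p).continuous_of_finiteDimensional continuous_const
  rw [hset]
  exact ⟨(S.offDiag.finite_toSet).isOpen_biInter hopen,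
    dense_biInter_of_isOpen hopen S.offDiag.countable_toSet
      fun p hp => LinearMap.dense_setOf_ne_zero (hf p hp)⟩

theorem dense_setOf_smul_intCast_injOn {n : ℕ} (S : Finset (Fin n → ℤ)) :
    Dense {v : Fin n → ℝ | ∃ s : ℝ, 0 ≤ s ∧ ∃ r : Fin n → ℤ,
      Set.InjOn (· ⬝ᵥ r) S ∧ v = s • (Int.cast ∘ r)} := by
  obtain ⟨hGopen, hGdense⟩ := isOpen_dense_setOf_dotProduct_ne S
  refine dense_iff_inter_open.2 fun U hU hUne => ?_
  obtain ⟨ρ, hρ⟩ := hGdense.inter_open_nonempty U hU hUne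
  set r : ℕ → Fin n → ℤ := fun N j => ⌊ρ j * N⌋
  have hlim : Tendsto (fun N : ℕ => (N : ℝ)⁻¹ • (Int.cast ∘ r N : Fin n → ℝ)) atTop (𝓝 ρ) := by
    refine tendsto_pi_nhds.2 fun j => ?_
    simpa [r, inv_mul_eq_div, Function.comp_def] using
      (tendsto_int_floor_mul_div_atTop (ρ j)).comp tendsto_natCast_atTop_atTop
  obtain ⟨N, hNU, hNG⟩ := (hlim.eventually ((hU.inter hGopen).mem_nhds hρ)).exists
  refine ⟨_, hNU, (N : ℝ)⁻¹, by positivity, r N, fun α hα β hβ hαβ => ?_, rfl⟩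
  by_contra hne
  refine hNG (α, β) (Finset.mem_offDiag.2 ⟨hα, hβ, hne⟩) ?_
  have hcast := congrArg (Int.castRingHom ℝ) hαβ
  simp only [RingHom.map_dotProduct, Int.coe_castRingHom] at hcast
  simp only [dotProduct_smul, hcast]

theorem IsOpen.convex_of_segment_subset_of_dense {E : Type*} [NormedAddCommGroup E]
    [NormedSpace ℝ E] {U D : Set E} (hU : IsOpen U) (hD : Dense D)
    (h : ∀ a ∈ U, ∀ d ∈ D, a + d ∈ U → segment ℝ a (a + d) ⊆ U) : Convex ℝ U := by
  refine convex_iff_segment_subset.2 fun a ha b hb => ?_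
  rintro _ ⟨s, t, hs, ht, hst, rfl⟩
  obtain rfl : s = 1 - t := by linarith
  obtain ⟨ε, hε, hball⟩ := Metric.isOpen_iff.1 hU a ha
  obtain ⟨ε', hε', hball'⟩ := Metric.isOpen_iff.1 hU b hb
  obtain ⟨d, hdD, hd⟩ := hD.exists_dist_lt (b - a) (lt_min hε hε')
  rw [dist_eq_norm] at hd
  have hsmall : ∀ u : ℝ, 0 ≤ u → u ≤ 1 → ‖u • (b - a - d)‖ < min ε ε' := fun u hu₀ hu₁ =>
    calc ‖u • (b - a - d)‖ = u * ‖b - a - d‖ := by rw [norm_smul, Real.norm_of_nonneg hu₀]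
      _ ≤ ‖b - a - d‖ := mul_le_of_le_one_left (norm_nonneg _) hu₁
      _ < min ε ε' := hd
  -- replace `[a, b]` by the nearby segment in direction `d` through the same point
  have ha' : (1 - t) • a + t • b - t • d ∈ U := by
    have hdiff : (1 - t) • a + t • b - t • d - a = t • (b - a - d) := by module
    exact hball (mem_ball_iff_norm.2 (hdiff ▸
      (hsmall t ht (by linarith)).trans_le (min_le_left _ _)))
  have hb' : (1 - t) • a + t • b - t • d + d ∈ U := by
    have hdiff : (1 - t) • a + t • b - t • d + d - b = -((1 - t) • (b - a - d)) := by module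
    exact hball' (mem_ball_iff_norm.2 (hdiff ▸ norm_neg ((1 - t) • (b - a - d)) ▸
      (hsmall (1 - t) hs (by linarith)).trans_le (min_le_right _ _)))
  exact h _ ha' d hdD hb' ⟨1 - t, t, hs, ht, hst, by module⟩

/-- The restriction of `evalL n S c` to the curve `τ ↦ (exp (w j + τ * r j))ⱼ`, divided by
`exp (τ * m)`, as a polynomial in `exp τ`; this needs `m ≤ α ⬝ᵥ r` on `S`. -/
noncomputable def curvePoly {n : ℕ} (S : Finset (Fin n → ℤ)) (c : (Fin n → ℤ) → ℂ)
    (r : Fin n → ℤ) (m : ℤ) (w : Fin n → ℂ) : ℂ[X] :=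
  ∑ α ∈ S, monomial (α ⬝ᵥ r - m).toNat (c α * Complex.exp (∑ j, (α j : ℂ) * w j))

section curvePoly

variable {n : ℕ} {S : Finset (Fin n → ℤ)} {c : (Fin n → ℤ) → ℂ} {r : Fin n → ℤ} {m : ℤ}

theorem exp_sum_mul_add_mul {α : Fin n → ℤ} (hm : m ≤ α ⬝ᵥ r) (w : Fin n → ℂ) (τ : ℂ) :
    Complex.exp (∑ j, (α j : ℂ) * (w j + τ * r j))
      = Complex.exp (τ * m) * Complex.exp (∑ j, (α j : ℂ) * w j)
        * Complex.exp τ ^ (α ⬝ᵥ r - m).toNat := by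
  have he : ((α ⬝ᵥ r - m).toNat : ℂ) = ∑ j, (α j : ℂ) * r j - m := by
    rw [← Int.cast_natCast, Int.toNat_of_nonneg (sub_nonneg.2 hm)]
    simp [dotProduct]
  have hτ : ∑ j, (α j : ℂ) * (τ * r j) = (∑ j, (α j : ℂ) * r j) * τ := by
    rw [Finset.sum_mul]
    exact Finset.sum_congr rfl fun _ _ => by ring
  rw [← Complex.exp_nat_mul, ← Complex.exp_add, ← Complex.exp_add, he]
  simp only [mul_add, Finset.sum_add_distrib, hτ]
  ring_nf

theorem evalL_exp_add_mul (hm : ∀ α ∈ S, m ≤ α ⬝ᵥ r) (w : Fin n → ℂ) (τ : ℂ) :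
    evalL n S c (fun j => Complex.exp (w j + τ * r j))
      = Complex.exp (τ * m) * (curvePoly S c r m w).eval (Complex.exp τ) := by
  simp only [evalL, curvePoly, eval_finsetSum, eval_monomial, Finset.mul_sum]
  refine Finset.sum_congr rfl fun α hα => ?_
  simp only [← Complex.exp_int_mul, ← Complex.exp_sum, exp_sum_mul_add_mul (hm α hα)]
  ring

theorem continuous_coeff_curvePoly (i : ℕ) :
    Continuous fun w => (curvePoly S c r m w).coeff i := by
  simp only [curvePoly, finsetSum_coeff, coeff_monomial]
  refine continuous_finsetSum _ fun α _ => ?_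
  split_ifs <;> fun_prop

theorem degree_curvePoly (hc : ∀ α ∈ S, c α ≠ 0) (hr : Set.InjOn (· ⬝ᵥ r) S)
    (hm : ∀ α ∈ S, m ≤ α ⬝ᵥ r) (hS : S.Nonempty) (w : Fin n → ℂ) :
    (curvePoly S c r m w).degree = (S.sup' hS (· ⬝ᵥ r) - m).toNat := by
  obtain ⟨αmax, hαmax, hsup⟩ := Finset.exists_mem_eq_sup' hS (· ⬝ᵥ r)
  refine degree_eq_of_le_of_coeff_ne_zero ?_ ?_
  · refine (degree_sum_le _ _).trans (Finset.sup_le fun α hα => (degree_monomial_le _ _).trans ?_)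
    exact_mod_cast Int.toNat_le_toNat (sub_le_sub_right (Finset.le_sup' (· ⬝ᵥ r) hα) m)
  · rw [curvePoly, finsetSum_coeff, Finset.sum_eq_single αmax, hsup, coeff_monomial, if_pos rfl]
    · exact mul_ne_zero (hc _ hαmax) (Complex.exp_ne_zero _)
    · intro β hβ hne
      rw [coeff_monomial, if_neg]
      have := hm β hβ
      have := hm αmax hαmax
      exact fun he => hne (hr hβ hαmax (show β ⬝ᵥ r = αmax ⬝ᵥ r by omega))
    · exact fun h => absurd hαmax h

theorem curvePoly_add_mul (hm : ∀ α ∈ S, m ≤ α ⬝ᵥ r) (w : Fin n → ℂ) (τ : ℂ) :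
    curvePoly S c r m (fun j => w j + τ * r j)
      = Complex.exp (τ * m) • (curvePoly S c r m w).comp (C (Complex.exp τ) * X) := by
  simp only [curvePoly, Polynomial.sum_comp, Finset.smul_sum]
  refine Finset.sum_congr rfl fun α hα => ?_
  rw [monomial_comp, mul_pow, ← C_pow, ← mul_assoc, ← C_mul, C_mul_X_pow_eq_monomial, smul_monomial,
    exp_sum_mul_add_mul (hm α hα), smul_eq_mul]
  ring_nf

theorem roots_curvePoly_add_mul (hm : ∀ α ∈ S, m ≤ α ⬝ᵥ r) (w : Fin n → ℂ) (τ : ℂ) :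
    (curvePoly S c r m (fun j => w j + τ * r j)).roots
      = (curvePoly S c r m w).roots.map (Complex.exp (-τ) * ·) := by
  have := roots_comp_C_mul_X_add_C (curvePoly S c r m w) (Complex.exp τ) 0
    (Complex.exp_ne_zero τ).isUnit
  simp only [map_zero, add_zero, sub_zero, Ring.inverse_eq_inv', ← Complex.exp_neg] at this
  rw [curvePoly_add_mul hm, roots_smul_nonzero _ (Complex.exp_ne_zero _), this]

theorem mem_amoebaOf_of_mem_roots_curvePoly (hm : ∀ α ∈ S, m ≤ α ⬝ᵥ r) {w : Fin n → ℂ}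
    {ρ : ℂ} (hρ : ρ ∈ (curvePoly S c r m w).roots) {t : ℝ} (ht : ‖ρ‖ = Real.exp t) :
    (fun j => (w j).re) + t • (Int.cast ∘ r) ∈ amoebaOf n (evalL n S c) := by
  have hρ0 : ρ ≠ 0 := norm_pos_iff.1 (ht ▸ Real.exp_pos t)
  refine ⟨fun j => Complex.exp (w j + Complex.log ρ * r j), fun j => Complex.exp_ne_zero _, ?_,
    fun j => ?_⟩
  · rw [evalL_exp_add_mul hm, Complex.exp_log hρ0, (isRoot_of_mem_roots hρ).eq_zero, mul_zero]
  · simp [Complex.norm_exp, Complex.log_re, ht]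

theorem exp_mem_roots_curvePoly (hm : ∀ α ∈ S, m ≤ α ⬝ᵥ r) {z : Fin n → ℂ} (hz : ∀ j, z j ≠ 0)
    (hzero : evalL n S c z = 0) {a : Fin n → ℝ} {s : ℝ}
    (hlog : ∀ j, Real.log ‖z j‖ = a j + s * r j)
    (hne : curvePoly S c r m (fun j => a j + (z j).arg * Complex.I) ≠ 0) :
    Complex.exp s ∈ (curvePoly S c r m (fun j => a j + (z j).arg * Complex.I)).roots := by
  have hz_eq : (fun j => Complex.exp (a j + (z j).arg * Complex.I + s * r j)) = z := by
    funext j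
    conv_rhs => rw [← Complex.exp_log (hz j)]
    congr 1
    apply Complex.ext <;> simp [Complex.log_re, Complex.log_im, hlog]
  rw [mem_roots hne, IsRoot, ← mul_eq_zero_iff_left (Complex.exp_ne_zero (s * m)),
    ← evalL_exp_add_mul hm, hz_eq, hzero]

end curvePoly

theorem evalL_filter_ne_zero (n : ℕ) (A : Finset (Fin n → ℤ)) (c : (Fin n → ℤ) → ℂ) :
    evalL n (A.filter (c · ≠ 0)) c = evalL n A c :=
  funext fun _ => Finset.sum_filter_of_ne fun _ _ h => left_ne_zero_of_mul h

section amoeba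

variable {n : ℕ} {A : Finset (Fin n → ℤ)} {c : (Fin n → ℤ) → ℂ} {r : Fin n → ℤ}

theorem countP_roots_curvePoly_eq (hc : ∀ α ∈ A, c α ≠ 0) (hr : Set.InjOn (· ⬝ᵥ r) A)
    {m : ℤ} (hm : ∀ α ∈ A, m ≤ α ⬝ᵥ r) (hA : A.Nonempty) {E : Set (Fin n → ℝ)}
    (hE : IsPreconnected E) (hEA : E ⊆ (amoebaOf n (evalL n A c))ᶜ) (θ : Fin n → ℝ)
    {u₁ u₂ : Fin n → ℝ} (h₁ : u₁ ∈ E) (h₂ : u₂ ∈ E) :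
    (curvePoly A c r m fun j => u₁ j + θ j * Complex.I).roots.countP (‖·‖ < 1)
      = (curvePoly A c r m fun j => u₂ j + θ j * Complex.I).roots.countP (‖·‖ < 1) := by
  refine hE.constant (f := fun u => (curvePoly A c r m fun j => u j + θ j * Complex.I).roots.countP
    (‖·‖ < 1)) (fun u hu => ContinuousAt.continuousWithinAt ?_) h₁ h₂
  rw [ContinuousAt, nhds_discrete ℕ, tendsto_pure]
  refine eventually_countP_roots_eq (fun v => degree_curvePoly hc hr hm hA _)
    (degree_curvePoly hc hr hm hA _) (fun i => ?_) fun ρ hρ h1 => hEA hu ?_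
  · exact ((continuous_coeff_curvePoly i).comp (by fun_prop)).tendsto u
  · simpa using mem_amoebaOf_of_mem_roots_curvePoly hm hρ (h1.trans Real.exp_zero.symm)

theorem add_smul_notMem_amoebaOf (hc : ∀ α ∈ A, c α ≠ 0) (hr : Set.InjOn (· ⬝ᵥ r) A)
    {E : Set (Fin n → ℝ)} (hE : IsPreconnected E) (hEA : E ⊆ (amoebaOf n (evalL n A c))ᶜ)
    {a : Fin n → ℝ} {s₀ s : ℝ} (ha : a ∈ E) (hb : a + s₀ • (Int.cast ∘ r) ∈ E)
    (hs : s ∈ Set.Icc 0 s₀) : a + s • (Int.cast ∘ r) ∉ amoebaOf n (evalL n A c) := by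
  rintro ⟨z, hz0, hzero, hlog⟩
  have hA : A.Nonempty := Finset.nonempty_iff_ne_empty.2 fun hA => hEA ha
    ⟨fun j => Complex.exp (a j), fun j => Complex.exp_ne_zero _, by simp [evalL, hA],
      fun j => by simp [Complex.norm_exp]⟩
  have hm : ∀ α ∈ A, A.inf' hA (· ⬝ᵥ r) ≤ α ⬝ᵥ r := fun α hα => Finset.inf'_le _ hα
  set G : (Fin n → ℝ) → ℂ[X] := fun u =>
    curvePoly A c r (A.inf' hA (· ⬝ᵥ r)) fun j => u j + (z j).arg * Complex.I
  have hroot : Complex.exp s ∈ (G a).roots :=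
    exp_mem_roots_curvePoly hm hz0 hzero (fun j => by simpa using hlog j)
      (ne_zero_of_coe_le_degree (degree_curvePoly hc hr hm hA _).ge)
  have hmem : ∀ t, Real.exp s = Real.exp t → a + t • (Int.cast ∘ r) ∈ amoebaOf n (evalL n A c) :=
    fun t ht => by
      simpa using mem_amoebaOf_of_mem_roots_curvePoly hm hroot (by rwa [Complex.norm_exp_ofReal])
  have h1 : 1 < Real.exp s := (Real.one_le_exp hs.1).lt_of_ne fun h =>
    hEA ha (by simpa using hmem 0 (by rw [← h, Real.exp_zero]))
  have h2 : Real.exp s < Real.exp s₀ :=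
    (Real.exp_le_exp.2 hs.2).lt_of_ne fun h => hEA hb (hmem s₀ h)
  have hcount := countP_roots_curvePoly_eq hc hr hm hA hE hEA (fun j => (z j).arg) ha hb
  have hscale : (G (a + s₀ • (Int.cast ∘ r))).roots = (G a).roots.map (Complex.exp (-s₀) * ·) := by
    rw [← roots_curvePoly_add_mul hm]
    simp only [G, Pi.add_apply, Pi.smul_apply, Function.comp_apply, smul_eq_mul,
      Complex.ofReal_add, Complex.ofReal_mul, Complex.ofReal_intCast, add_right_comm]
  rw [hscale, Multiset.countP_map, ← Multiset.countP_eq_card_filter] at hcount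
  have hnorm : ∀ ρ : ℂ, ‖Complex.exp (-s₀) * ρ‖ = Real.exp (-s₀) * ‖ρ‖ := fun ρ => by
    rw [norm_mul, ← Complex.ofReal_neg, Complex.norm_exp_ofReal]
  -- `exp s` is counted on the right of `hcount` but not on the left
  refine (Multiset.countP_lt_countP (fun ρ hρ => ?_) hroot ?_ ?_).ne hcount
  · rw [hnorm]
    refine (mul_le_of_le_one_left (norm_nonneg _) ?_).trans_lt hρ
    exact Real.exp_le_one_iff.2 (by linarith [hs.1, hs.2])
  · rw [hnorm, Complex.norm_exp_ofReal, ← Real.exp_add]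
    exact Real.exp_lt_one_iff.2 (by linarith [Real.exp_lt_exp.1 h2])
  · rw [Complex.norm_exp_ofReal]
    exact h1.not_gt

theorem segment_subset_connectedComponentIn_compl_amoebaOf (hc : ∀ α ∈ A, c α ≠ 0)
    (hr : Set.InjOn (· ⬝ᵥ r) A) {x a : Fin n → ℝ} {s₀ : ℝ} (hs₀ : 0 ≤ s₀)
    (ha : a ∈ connectedComponentIn (amoebaOf n (evalL n A c))ᶜ x)
    (hb : a + s₀ • (Int.cast ∘ r) ∈ connectedComponentIn (amoebaOf n (evalL n A c))ᶜ x) :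
    segment ℝ a (a + s₀ • (Int.cast ∘ r)) ⊆ connectedComponentIn (amoebaOf n (evalL n A c))ᶜ x := by
  have hseg : segment ℝ a (a + s₀ • (Int.cast ∘ r)) ⊆ (amoebaOf n (evalL n A c))ᶜ := by
    rw [segment_eq_image']
    rintro _ ⟨t, ht, rfl⟩
    have := add_smul_notMem_amoebaOf hc hr isPreconnected_connectedComponentIn
      (connectedComponentIn_subset _ _) ha hb
      ⟨mul_nonneg ht.1 hs₀, mul_le_of_le_one_left hs₀ ht.2⟩
    simpa [smul_smul] using this
  rw [connectedComponentIn_eq ha]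
  exact (convex_segment _ _).isPreconnected.subset_connectedComponentIn
    (left_mem_segment _ _ _) hseg

end amoeba

/-- Every connected component of the complement of the amoeba of a Laurent
polynomial is an open convex subset of ℝⁿ. -/
theorem amoeba_complement_components_open_convex (n : ℕ) (A : Finset (Fin n → ℤ))
    (c : (Fin n → ℤ) → ℂ) (hcl : IsClosed (amoebaOf n (evalL n A c))) :
    ∀ x ∈ (amoebaOf n (evalL n A c))ᶜ,
      IsOpen (connectedComponentIn (amoebaOf n (evalL n A c))ᶜ x) ∧
      Convex ℝ (connectedComponentIn (amoebaOf n (evalL n A c))ᶜ x) := by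
  intro x _
  have hopen := hcl.isOpen_compl.connectedComponentIn (x := x)
  refine ⟨hopen, ?_⟩
  rw [← evalL_filter_ne_zero] at hopen ⊢
  refine hopen.convex_of_segment_subset_of_dense
    (dense_setOf_smul_intCast_injOn (A.filter (c · ≠ 0))) ?_
  rintro a ha _ ⟨s₀, hs₀, r, hr, rfl⟩ hb
  exact segment_subset_connectedComponentIn_compl_amoebaOf
    (fun α hα => (Finset.mem_filter.1 hα).2) hr hs₀ ha hb
end

section
/- The complement of the amoeba of z₁ + z₂ + 1 in ℝ² has exactly three connected components. -/
/-!
In logarithmic coordinates `v` the monomials `z₁, z₂, 1` have moduli `exp (ℓ j v)` for three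
linear forms `ℓ j`. By the law of cosines, `v` lies in the amoeba exactly when these three moduli
satisfy the triangle inequalities, so the complement is the union of the three *lopsided* regions,
where one modulus exceeds the sum of the other two. These regions are open, nonempty and pairwise
disjoint, and each is convex: dividing by the dominant modulus turns it into a strict sublevel set
of a sum of exponentials of linear forms. Hence they are precisely the connected components.
-/

open Real

/-- The amoeba of the linear polynomial z₁ + z₂ + 1. -/
def linAmoeba : Set (Fin 2 → ℝ) :=
  {v | ∃ z₁ z₂ : ℂ, z₁ ≠ 0 ∧ z₂ ≠ 0 ∧ z₁ + z₂ + 1 = 0 ∧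
        v 0 = Real.log ‖z₁‖ ∧ v 1 = Real.log ‖z₂‖}

open Function Set

section Components

variable {X ι : Type*} [TopologicalSpace X] {U : ι → Set X}

theorem connectedComponentIn_iUnion_eq_of_isOpen (hopen : ∀ i, IsOpen (U i))
    (hconn : ∀ i, IsPreconnected (U i)) (hdisj : Pairwise (Disjoint on U)) {i : ι} {x : X}
    (hx : x ∈ U i) : connectedComponentIn (⋃ j, U j) x = U i := by
  refine subset_antisymm ?_ ((hconn i).subset_connectedComponentIn hx (subset_iUnion U i))
  have hcover : ⋃ j, U j ⊆ U i ∪ ⋃ (j) (_ : j ≠ i), U j := by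
    refine iUnion_subset fun j => ?_
    by_cases hj : j = i
    · exact hj ▸ subset_union_left
    · exact (subset_biUnion_of_mem (u := U) hj).trans subset_union_right
  exact isPreconnected_connectedComponentIn.subset_left_of_subset_union (hopen i)
    (isOpen_biUnion fun j _ => hopen j)
    (disjoint_iUnion₂_right.2 fun j hj => hdisj (Ne.symm hj))
    ((connectedComponentIn_subset _ _).trans hcover)
    ⟨x, mem_connectedComponentIn (mem_iUnion_of_mem i hx), hx⟩

theorem ncard_connectedComponentsIn_iUnion (hopen : ∀ i, IsOpen (U i))
    (hconn : ∀ i, IsPreconnected (U i)) (hdisj : Pairwise (Disjoint on U))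
    (hne : ∀ i, (U i).Nonempty) :
    {C | ∃ x ∈ ⋃ j, U j, C = connectedComponentIn (⋃ j, U j) x}.ncard = Nat.card ι := by
  have hrange : {C | ∃ x ∈ ⋃ j, U j, C = connectedComponentIn (⋃ j, U j) x} = range U := by
    ext C
    constructor
    · rintro ⟨x, hx, rfl⟩
      obtain ⟨i, hi⟩ := mem_iUnion.1 hx
      exact ⟨i, (connectedComponentIn_iUnion_eq_of_isOpen hopen hconn hdisj hi).symm⟩
    · rintro ⟨i, rfl⟩
      obtain ⟨x, hx⟩ := hne i
      exact ⟨x, mem_iUnion_of_mem i hx,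
        (connectedComponentIn_iUnion_eq_of_isOpen hopen hconn hdisj hx).symm⟩
  have hinj : Injective U := fun i j hij => by
    by_contra hne'
    obtain ⟨x, hx⟩ := hne i
    exact Disjoint.ne_of_mem (hdisj hne') hx (hij ▸ hx) rfl
  rw [hrange, ncard_range_of_injective hinj]

end Components

section Lopsided

variable {ι E : Type*} [Fintype ι]

/-- `a i` exceeds the sum of the other terms. -/
def IsLopsidedAt (a : ι → ℝ) (i : ι) : Prop := ∑ j, a j < 2 * a i

theorem IsLopsidedAt.eq {a : ι → ℝ} (ha : 0 ≤ a) {i j : ι} (hi : IsLopsidedAt a i)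
    (hj : IsLopsidedAt a j) : i = j := by
  by_contra hij
  have := Finset.add_le_sum (fun k _ => ha k) (Finset.mem_univ i) (Finset.mem_univ j) hij
  unfold IsLopsidedAt at hi hj
  linarith

variable [TopologicalSpace E] [AddCommGroup E] [Module ℝ E] (ℓ : ι → E →L[ℝ] ℝ)

def lopsidedRegion (i : ι) : Set E := {v | IsLopsidedAt (fun j => exp (ℓ j v)) i}

theorem isOpen_lopsidedRegion (i : ι) : IsOpen (lopsidedRegion ℓ i) :=
  isOpen_lt (by fun_prop) (by fun_prop)

theorem pairwise_disjoint_lopsidedRegion : Pairwise (Disjoint on lopsidedRegion ℓ) :=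
  fun _ _ hij => disjoint_left.2 fun _ hi hj => hij (hi.eq (fun _ => (exp_pos _).le) hj)

/-- Dividing by the dominant term `exp (ℓ i v)` makes the region a sublevel set of the convex
function `∑ j, exp ((ℓ j - ℓ i) v)`. -/
theorem convex_lopsidedRegion (i : ι) : Convex ℝ (lopsidedRegion ℓ i) := by
  have hconvex : ConvexOn ℝ univ (∑ j, fun v => exp ((ℓ j - ℓ i) v)) :=
    Finset.sum_induction _ (ConvexOn ℝ univ) (fun _ _ => ConvexOn.add)
      (convexOn_const 0 convex_univ)
      fun j _ => convexOn_exp.comp_linearMap ((ℓ j - ℓ i : E →L[ℝ] ℝ) : E →ₗ[ℝ] ℝ)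
  convert hconvex.convex_lt 2 using 1
  ext v
  simp only [lopsidedRegion, IsLopsidedAt, mem_ofPred_eq, mem_univ, true_and, Finset.sum_apply,
    sub_apply, exp_sub, ← Finset.sum_div, div_lt_iff₀ (exp_pos _)]

end Lopsided

theorem norm_le_norm_add_norm_of_add_add_eq_zero {G : Type*} [SeminormedAddCommGroup G]
    {a b c : G} (h : a + b + c = 0) : ‖a‖ ≤ ‖b‖ + ‖c‖ := by
  rw [← norm_neg a, neg_eq_of_add_eq_zero_right (by rwa [← add_assoc])]
  exact norm_add_le b c

theorem Complex.exists_add_add_one_eq_zero_and_norm_eq_iff {a b : ℝ} (hb : 0 < b) :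
    (∃ z₁ z₂ : ℂ, z₁ + z₂ + 1 = 0 ∧ ‖z₁‖ = a ∧ ‖z₂‖ = b) ↔
      a ≤ b + 1 ∧ b ≤ a + 1 ∧ 1 ≤ a + b := by
  constructor
  · rintro ⟨z₁, z₂, hsum, rfl, rfl⟩
    refine ⟨?_, ?_, ?_⟩
    · simpa using norm_le_norm_add_norm_of_add_add_eq_zero hsum
    · simpa using norm_le_norm_add_norm_of_add_add_eq_zero
        (show z₂ + z₁ + 1 = 0 by linear_combination hsum)
    · simpa using norm_le_norm_add_norm_of_add_add_eq_zero
        (show 1 + z₁ + z₂ = 0 by linear_combination hsum)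
  · rintro ⟨hab, hba, h1ab⟩
    -- law of cosines: `c` is the cosine of the angle between `z₂` and `1`
    set c := (a ^ 2 - b ^ 2 - 1) / (2 * b)
    have hc : c ^ 2 ≤ 1 := by
      rw [div_pow, div_le_one (by positivity)]
      nlinarith [mul_nonneg (sub_nonneg.2 hab) (sub_nonneg.2 hba), mul_nonneg
        (sub_nonneg.2 h1ab) (by linarith : (0 : ℝ) ≤ a + b + 1)]
    have hbc : 2 * b * c = a ^ 2 - b ^ 2 - 1 := by unfold c; field_simp
    set s := √(1 - c ^ 2)
    have hs : s ^ 2 = 1 - c ^ 2 := sq_sqrt (by linarith)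
    refine ⟨-(((1 + b * c : ℝ) : ℂ) + (b * s : ℝ) * I), (b * c : ℝ) + (b * s : ℝ) * I,
      by push_cast; ring, ?_, ?_⟩
    · rw [norm_neg, norm_add_mul_I,
        show (1 + b * c) ^ 2 + (b * s) ^ 2 = a ^ 2 by linear_combination b ^ 2 * hs + hbc]
      exact sqrt_sq (by linarith)
    · rw [norm_add_mul_I,
        show (b * c) ^ 2 + (b * s) ^ 2 = b ^ 2 by linear_combination b ^ 2 * hs]
      exact sqrt_sq hb.le

theorem mem_linAmoeba_iff (v : Fin 2 → ℝ) :
    v ∈ linAmoeba ↔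
      exp (v 0) ≤ exp (v 1) + 1 ∧ exp (v 1) ≤ exp (v 0) + 1 ∧
        1 ≤ exp (v 0) + exp (v 1) := by
  have hlog (z : ℂ) (x : ℝ) : z ≠ 0 ∧ x = log ‖z‖ ↔ ‖z‖ = exp x := by
    constructor
    · rintro ⟨hz, rfl⟩
      exact (exp_log (norm_pos_iff.2 hz)).symm
    · intro h
      exact ⟨norm_ne_zero_iff.1 (h ▸ (exp_pos x).ne'), by rw [h, log_exp]⟩
  rw [← Complex.exists_add_add_one_eq_zero_and_norm_eq_iff (exp_pos _)]
  simp only [linAmoeba, mem_ofPred_eq, ← hlog]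
  exact exists₂_congr fun _ _ => by tauto

/-- The exponents of the monomials `z₁`, `z₂`, `1` of `z₁ + z₂ + 1`, as linear forms. -/
def linExponents : Fin 3 → (Fin 2 → ℝ) →L[ℝ] ℝ := ![.proj 0, .proj 1, 0]

theorem mem_lopsidedRegion_linExponents {v : Fin 2 → ℝ} {i : Fin 3} :
    v ∈ lopsidedRegion linExponents i ↔ IsLopsidedAt ![exp (v 0), exp (v 1), 1] i := by
  rw [lopsidedRegion, mem_ofPred_eq]
  convert Iff.rfl using 2
  funext j
  fin_cases j <;> simp [linExponents]

theorem linAmoeba_compl_eq_iUnion : linAmoebaᶜ = ⋃ i, lopsidedRegion linExponents i := by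
  ext v
  simp only [mem_compl_iff, mem_linAmoeba_iff, not_and_or, not_le, mem_iUnion,
    mem_lopsidedRegion_linExponents, IsLopsidedAt, Fin.sum_univ_three, Fin.exists_fin_succ,
    Matrix.cons_val_zero, Matrix.cons_val_one, Matrix.cons_val, Matrix.cons_val_succ,
    Matrix.cons_val_fin_one, mul_one, IsEmpty.exists_iff, or_false]
  refine or_congr ?_ (or_congr ?_ ?_) <;> constructor <;> intro <;> linarith

theorem lopsidedRegion_linExponents_nonempty (i : Fin 3) :
    (lopsidedRegion linExponents i).Nonempty := by
  fin_cases i <;> [use ![log 3, 0]; use ![0, log 3]; use ![-log 3, -log 3]] <;>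
    norm_num [mem_lopsidedRegion_linExponents, IsLopsidedAt, Fin.sum_univ_three,
      Matrix.cons_val_two, exp_neg, exp_log three_pos]

/-- The complement of the amoeba of z₁ + z₂ + 1 in ℝ² has exactly three
connected components. -/
theorem linAmoeba_compl_three_components :
    {C : Set (Fin 2 → ℝ) | ∃ x ∈ linAmoebaᶜ,
        C = connectedComponentIn linAmoebaᶜ x}.ncard = 3 := by
  rw [linAmoeba_compl_eq_iUnion, ncard_connectedComponentsIn_iUnion (isOpen_lopsidedRegion _)
    (fun i => (convex_lopsidedRegion _ i).isPreconnected) (pairwise_disjoint_lopsidedRegion _)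
    lopsidedRegion_linExponents_nonempty, Nat.card_eq_fintype_card, Fintype.card_fin]
end
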